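/- Let C : T ⇒ X be an admissible multifunction on a complete σ-finite inner regular measure space and A ∈ 𝒜. If C(t) ≠ ∅ for all t ∈ A, then there exists a strongly measurable selection x : A → X with x(t) ∈ C(t) for μ-a.e. t ∈ A. -/

import Mathlib

open MeasureTheory Topology Filter Set Pointwise
open scoped ENNReal NNReal

noncomputable section

/-- Lower semicontinuity (in the set-valued sense) of `Φ` at every point of `B`,
relative to `B`. -/
def LscOn {T Y : Type*} [TopologicalSpace T] [TopologicalSpace Y]
    (B : Set T) (Φ : T → Set Y) : Prop :=
  ∀ t ∈ B, ∀ V : Set Y, IsOpen V → (Φ t ∩ V).Nonempty →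
    ∀ᶠ s in nhdsWithin t B, (Φ s ∩ V).Nonempty

/-- Epigraph of an extended-real-valued function. -/
def epi {X : Type*} (g : X → EReal) : Set (X × ℝ) :=
  {p : X × ℝ | g p.1 ≤ (p.2 : EReal)}

/-- Strict epigraph. -/
def epis {X : Type*} (g : X → EReal) : Set (X × ℝ) :=
  {p : X × ℝ | g p.1 < (p.2 : EReal)}

/-- Inner regularity of a measure: every measurable set of finite measure can be
approximated from inside by compact sets. -/
def InnerRegularM {T : Type*} [TopologicalSpace T] [MeasurableSpace T]
    (μ : Measure T) : Prop :=
  ∀ ε : ℝ≥0∞, 0 < ε → ∀ B : Set T, MeasurableSet B → μ B < ⊤ →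
    ∃ K ⊆ B, IsCompact K ∧ μ (B \ K) < ε

/-- Lusin integrand. -/
def LusinIntegrand {T X : Type*} [TopologicalSpace T] [MeasurableSpace T]
    [TopologicalSpace X] (μ : Measure T) (f : T → X → EReal) : Prop :=
  ∀ ε : ℝ≥0∞, 0 < ε → ∀ A : Set T, MeasurableSet A → μ A < ⊤ →
    ∃ B ⊆ A, IsCompact B ∧ μ (A \ B) < ε ∧ LscOn B (fun t => epi (f t))

/-- Uniform Lusin family of integrands. -/
def UniformLusinFamily {T X I : Type*} [TopologicalSpace T] [MeasurableSpace T]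
    [TopologicalSpace X] (μ : Measure T) (f : I → T → X → EReal) : Prop :=
  ∀ ε : ℝ≥0∞, 0 < ε → ∀ A : Set T, MeasurableSet A → μ A < ⊤ →
    ∃ B ⊆ A, IsCompact B ∧ μ (A \ B) < ε ∧ ∀ i : I, LscOn B (fun t => epi (f i t))

/-- Scorza-Dragoni function. -/
def ScorzaDragoniFun {T X : Type*} [TopologicalSpace T] [MeasurableSpace T]
    [TopologicalSpace X] (μ : Measure T) (g : T → X → EReal) : Prop :=
  ∀ ε : ℝ≥0∞, 0 < ε → ∀ A : Set T, MeasurableSet A → μ A < ⊤ →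
    ∃ B ⊆ A, IsCompact B ∧ μ (A \ B) < ε ∧
      ContinuousOn (fun p : T × X => g p.1 p.2) (B ×ˢ (Set.univ : Set X))

/-- Lusin multifunction (uniform family version). -/
def UniformLusinMultifamily {T X I : Type*} [TopologicalSpace T] [MeasurableSpace T]
    [TopologicalSpace X] (μ : Measure T) (C : I → T → Set X) : Prop :=
  ∀ ε : ℝ≥0∞, 0 < ε → ∀ A : Set T, MeasurableSet A → μ A < ⊤ →
    ∃ B ⊆ A, IsCompact B ∧ μ (A \ B) < ε ∧ ∀ i : I, LscOn B (C i)

/-- `g ∈ Γ(X)`: proper, convex (convex epigraph) and lower semicontinuous. -/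
def InGamma {X : Type*} [AddCommGroup X] [Module ℝ X] [TopologicalSpace X]
    (g : X → EReal) : Prop :=
  (∃ x, g x ≠ ⊤) ∧ (∀ x, g x ≠ ⊥) ∧ LowerSemicontinuous g ∧ Convex ℝ (epi g)

/-- Admissible integrand. -/
def AdmissibleIntegrand {T X : Type*} [TopologicalSpace T] [MeasurableSpace T]
    [NormedAddCommGroup X] [NormedSpace ℝ X] (μ : Measure T)
    (f : T → X → EReal) : Prop :=
  ∃ (I : Type) (fi : I → T → X → EReal),
    UniformLusinFamily μ fi ∧ (∀ i t, InGamma (fi i t)) ∧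
    ∀ t, epi (f t) = closure (epi (fun x => ⨅ i : I, fi i t x))

/-- Admissible multifunction. -/
def AdmissibleMultifunction {T X : Type*} [TopologicalSpace T] [MeasurableSpace T]
    [NormedAddCommGroup X] [NormedSpace ℝ X] (μ : Measure T)
    (C : T → Set X) : Prop :=
  ∃ (I : Type) (Ci : I → T → Set X),
    UniformLusinMultifamily μ Ci ∧ (∀ i t, IsClosed (Ci i t) ∧ Convex ℝ (Ci i t)) ∧
    ∀ t, C t = closure (⋃ i : I, Ci i t)

open Classical in
/-- Indicator function with values in `EReal`. -/
def indE {X : Type*} (S : Set X) : X → EReal := fun x => if x ∈ S then 0 else ⊤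

/-- Positive part of an extended real, as an `ℝ≥0∞`. -/
def ERealPos (x : EReal) : ℝ≥0∞ := if x = ⊤ then ⊤ else ENNReal.ofReal x.toReal

/-- Upper integral of an extended-real-valued function, with the convention
`+∞ + (-∞) = +∞`. -/
def upInt {T : Type*} [MeasurableSpace T] (μ : Measure T) (g : T → EReal) : EReal :=
  if (∫⁻ t, ERealPos (g t) ∂μ) = ⊤ then ⊤
  else ((∫⁻ t, ERealPos (g t) ∂μ : ℝ≥0∞) : EReal) - ((∫⁻ t, ERealPos (-(g t)) ∂μ : ℝ≥0∞) : EReal)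

end

/-!
The Lusin property makes `C` lower semicontinuous on compact sets of almost full measure, since
lower semicontinuity survives unions and closures. Where a multifunction `Φ` is lower
semicontinuous on a compact set, compactness turns "`Φ t` meets the ball of radius `r` about some
point" into finitely many centres on an open cover, that is, into a simple function; inner
regularity makes this work on any set of finite measure, up to a small loss. Refining with radii
`2⁻ⁿ`, each step inside the balls of the previous one, gives simple functions that are
geometrically Cauchy and converge into the closed values of `Φ` outside a set of small measure.
σ-finiteness and countable gluing remove the exceptional set.
-/

open Metric

section LscOn

variable {T Y : Type*} [TopologicalSpace T] [TopologicalSpace Y]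

theorem LscOn.mono {B P : Set T} {Φ : T → Set Y} (h : LscOn B Φ) (hPB : P ⊆ B) :
    LscOn P Φ := fun t ht V hV hne =>
  (h t (hPB ht) V hV hne).filter_mono (nhdsWithin_mono t hPB)

theorem LscOn.inter_isOpen {B : Set T} {Φ : T → Set Y} (h : LscOn B Φ) {O : Set Y}
    (hO : IsOpen O) : LscOn B fun t => Φ t ∩ O := by
  intro t ht V hV hne
  simp only [inter_assoc] at hne ⊢
  exact h t ht _ (hO.inter hV) hne

theorem LscOn.iUnion {ι : Sort*} {B : Set T} {Φ : ι → T → Set Y} (h : ∀ i, LscOn B (Φ i)) :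
    LscOn B fun t => ⋃ i, Φ i t := by
  intro t ht V hV hne
  simp only [iUnion_inter, nonempty_iUnion] at hne ⊢
  obtain ⟨i, hi⟩ := hne
  exact (h i t ht V hV hi).mono fun s hs => ⟨i, hs⟩

theorem LscOn.closure {B : Set T} {Φ : T → Set Y} (h : LscOn B Φ) :
    LscOn B fun t => closure (Φ t) := by
  intro t ht V hV hne
  simp only [closure_inter_open_nonempty_iff hV] at hne ⊢
  exact h t ht V hV hne

end LscOn

theorem exists_seq_of_forall_exists_succ {α : Type*} {P : ℕ → α → Prop}
    {R : ℕ → α → α → Prop} {a₀ : α} (h₀ : P 0 a₀)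
    (h : ∀ n a, P n a → ∃ b, P (n + 1) b ∧ R n a b) :
    ∃ f : ℕ → α, f 0 = a₀ ∧ ∀ n, P n (f n) ∧ R n (f n) (f (n + 1)) := by
  choose g hgP hgR using h
  let s : ∀ n, {a // P n a} := fun n =>
    Nat.rec ⟨a₀, h₀⟩ (fun n a => ⟨g n a a.2, hgP n a a.2⟩) n
  exact ⟨fun n => (s n).1, rfl, fun n => ⟨(s n).2, hgR n (s n).1 (s n).2⟩⟩

theorem IsClosed.mem_of_tendsto_of_inter_ball_nonempty {X : Type*} [PseudoMetricSpace X]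
    {F : Set X} (hF : IsClosed F) {u : ℕ → X} {a : X} {r : ℕ → ℝ}
    (hu : Tendsto u atTop (𝓝 a)) (hr : Tendsto r atTop (𝓝 0))
    (h : ∀ n, (F ∩ ball (u n) (r n)).Nonempty) : a ∈ F := by
  choose z hzF hzu using h
  have hz : Tendsto z atTop (𝓝 a) :=
    hu.congr_dist (squeeze_zero (fun _ => dist_nonneg) (fun n => (mem_ball'.1 (hzu n)).le) hr)
  exact hF.mem_of_tendsto hz (Eventually.of_forall hzF)

namespace MeasureTheory

section Measure

variable {T : Type*} [MeasurableSpace T] {μ : Measure T}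

theorem exists_measurableSet_subset_measure_diff_le {S : Set T} (hS : MeasurableSet S)
    (B : Set T) : ∃ B' ⊆ B, MeasurableSet B' ∧ μ (S \ B') ≤ μ (S \ B) := by
  refine ⟨S \ toMeasurable μ (S \ B), fun t ht => ?_,
    hS.diff (measurableSet_toMeasurable μ _), ?_⟩
  · by_contra htB
    exact ht.2 (subset_toMeasurable μ _ ⟨ht.1, htB⟩)
  · rw [sdiff_sdiff_right_self]
    exact (measure_mono inter_subset_right).trans_eq (measure_toMeasurable _)

theorem measure_diff_iInter_le (S : Set T) (D : ℕ → Set T) :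
    μ (S \ ⋂ n, D n) ≤ μ (S \ D 0) + ∑' n, μ (D n \ D (n + 1)) := by
  have hsub : S \ ⋂ n, D n ⊆ (S \ D 0) ∪ ⋃ n, D n \ D (n + 1) := by
    rintro t ⟨htS, htD⟩
    by_contra h
    simp only [mem_union, Set.mem_sdiff, mem_iUnion, not_or, not_and, not_not, not_exists] at h
    exact htD (mem_iInter.2 fun n => Nat.rec (h.1 htS) (fun n hn => h.2 n hn) n)
  exact (measure_mono hsub).trans <|
    (measure_union_le _ _).trans (add_le_add le_rfl (measure_iUnion_le _))

theorem SimpleFunc.exists_eq_of_mem_biUnion {X ι : Type*} [Nonempty X] (u : Finset ι)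
    {O : ι → Set T} (hO : ∀ i, MeasurableSet (O i)) (c : ι → X) :
    ∃ y : SimpleFunc T X, ∀ t ∈ ⋃ i ∈ u, O i, ∃ i ∈ u, t ∈ O i ∧ y t = c i := by
  classical
  induction u using Finset.induction_on with
  | empty => exact ⟨SimpleFunc.const T (Classical.arbitrary X), by simp⟩
  | insert a u _ ih =>
    obtain ⟨y, hy⟩ := ih
    refine ⟨SimpleFunc.piecewise (O a) (hO a) (SimpleFunc.const T (c a)) y, fun t ht => ?_⟩
    by_cases hta : t ∈ O a
    · exact ⟨a, Finset.mem_insert_self a u, hta, by simp [hta]⟩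
    · rw [Finset.set_biUnion_insert, mem_union] at ht
      obtain ⟨i, hi, hti, hyt⟩ := hy t (ht.resolve_left hta)
      exact ⟨i, Finset.mem_insert_of_mem hi, hti, by simp [hta, hyt]⟩

theorem exists_aestronglyMeasurable_forall_mem_of_inter_ball_nonempty {X : Type*}
    [PseudoMetricSpace X] [CompleteSpace X] [Nonempty X] {Φ : T → Set X} {D : Set T}
    (hD : MeasurableSet D) (hcl : ∀ t ∈ D, IsClosed (Φ t)) {f : ℕ → T → X}
    (hf : ∀ n, AEStronglyMeasurable (f n) (μ.restrict D))
    (hdist : ∀ t ∈ D, ∀ n, dist (f n t) (f (n + 1) t) ≤ 2 * (1 / 2) ^ n)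
    (hΦ : ∀ t ∈ D, ∀ n, (Φ t ∩ ball (f n t) ((1 / 2) ^ n)).Nonempty) :
    ∃ x : T → X, AEStronglyMeasurable x (μ.restrict D) ∧ ∀ t ∈ D, x t ∈ Φ t := by
  have hlim : ∀ t ∈ D, Tendsto (fun n => f n t) atTop (𝓝 (limUnder atTop fun n => f n t)) :=
    fun t ht => (cauchySeq_of_le_geometric _ _ (by norm_num) (hdist t ht)).tendsto_limUnder
  refine ⟨fun t => limUnder atTop fun n => f n t, aestronglyMeasurable_of_tendsto_ae atTop hf
    ((ae_restrict_iff' hD).2 (Eventually.of_forall hlim)), fun t ht => ?_⟩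
  exact (hcl t ht).mem_of_tendsto_of_inter_ball_nonempty (hlim t ht)
    (tendsto_pow_atTop_nhds_zero_of_lt_one (by norm_num) (by norm_num)) (hΦ t ht)

variable {X : Type*} [TopologicalSpace X] [TopologicalSpace.PseudoMetrizableSpace X]

theorem exists_aestronglyMeasurable_forall_mem_iUnion {Φ : T → Set X} {D : ℕ → Set T}
    (hD : ∀ n, MeasurableSet (D n)) {x : ℕ → T → X}
    (hx : ∀ n, AEStronglyMeasurable (x n) (μ.restrict (D n)))
    (hxΦ : ∀ n, ∀ t ∈ D n, x n t ∈ Φ t) :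
    ∃ g : T → X, AEStronglyMeasurable g (μ.restrict (⋃ n, D n)) ∧
      ∀ t ∈ ⋃ n, D n, g t ∈ Φ t := by
  classical
  let g : T → X := fun t => if h : ∃ n, t ∈ D n then x (Nat.find h) t else x 0 t
  have hg : ∀ n, ∀ t ∈ disjointed D n, g t = x n t := by
    intro n t ht
    rw [disjointed_eq_inter_compl, mem_inter_iff, mem_iInter₂] at ht
    have h : ∃ k, t ∈ D k := ⟨n, ht.1⟩
    have hfind : Nat.find h = n := (Nat.find_eq_iff h).2 ⟨ht.1, fun k hk => ht.2 k hk⟩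
    simp only [g, dif_pos h, hfind]
  refine ⟨g, ?_, fun t ht => ?_⟩
  · rw [← iUnion_disjointed, aestronglyMeasurable_iUnion_iff]
    exact fun n => ((hx n).mono_set (disjointed_subset D n)).congr <|
      (ae_restrict_iff' (MeasurableSet.disjointed hD n)).2
        (Eventually.of_forall fun t ht => (hg n t ht).symm)
  · have h := mem_iUnion.1 ht
    simp only [g, dif_pos h]
    exact hxΦ _ t (Nat.find_spec h)

-- The sets `A ∩ spanningSets μ n` increase to `A`, so their approximate selections with losses
-- `1 / n` cover `A` up to a null set.
theorem exists_aestronglyMeasurable_ae_mem_of_forall_exists [SigmaFinite μ] {Φ : T → Set X}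
    {A : Set T} (hA : MeasurableSet A)
    (h : ∀ S ⊆ A, MeasurableSet S → μ S < ⊤ → ∀ ε : ℝ≥0∞, 0 < ε →
      ∃ D ⊆ S, MeasurableSet D ∧ μ (S \ D) ≤ ε ∧
        ∃ x : T → X, AEStronglyMeasurable x (μ.restrict D) ∧ ∀ t ∈ D, x t ∈ Φ t) :
    ∃ x : T → X, AEStronglyMeasurable x (μ.restrict A) ∧ ∀ᵐ t ∂μ.restrict A, x t ∈ Φ t := by
  let S : ℕ → Set T := fun n => A ∩ spanningSets μ n
  choose D hDS hD hSD x hx hxΦ using fun n : ℕ =>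
    h (S n) inter_subset_left (hA.inter (measurableSet_spanningSets μ n))
      ((measure_mono inter_subset_right).trans_lt (measure_spanningSets_lt_top μ n))
      (n : ℝ≥0∞)⁻¹ (ENNReal.inv_pos.2 (ENNReal.natCast_ne_top n))
  have hcover : μ (A \ ⋃ n, D n) = 0 := by
    have hA : A \ ⋃ n, D n = ⋃ N, S N \ ⋃ n, D n := by
      rw [← iUnion_sdiff, ← inter_iUnion, iUnion_spanningSets, inter_univ]
    rw [hA, measure_iUnion_null_iff]
    refine fun N => le_antisymm (ge_of_tendsto ENNReal.tendsto_inv_nat_nhds_zero ?_) zero_le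
    filter_upwards [eventually_ge_atTop N] with n hn
    exact (measure_mono (sdiff_subset_sdiff (inter_subset_inter_right _
      (monotone_spanningSets μ hn)) (subset_iUnion D n))).trans (hSD n)
  obtain ⟨g, hg, hgΦ⟩ := exists_aestronglyMeasurable_forall_mem_iUnion hD hx hxΦ
  have hle : μ.restrict A ≤ μ.restrict (⋃ n, D n) :=
    Measure.restrict_mono_ae (ae_le_set.2 hcover)
  exact ⟨g, hg.mono_measure hle,
    ae_mono hle ((ae_restrict_iff' (MeasurableSet.iUnion hD)).2 (Eventually.of_forall hgΦ))⟩

end Measure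

end MeasureTheory

namespace InnerRegularM

variable {T X : Type*} [TopologicalSpace T] [MeasurableSpace T] [OpensMeasurableSpace T]
  {μ : Measure T} [PseudoMetricSpace X] [Nonempty X]

theorem exists_simpleFunc_inter_ball_nonempty (hreg : InnerRegularM μ) {Ψ : T → Set X}
    {P : Set T} (hP : MeasurableSet P) (hPfin : μ P < ⊤) (hΨ : LscOn P Ψ)
    (hne : ∀ t ∈ P, (Ψ t).Nonempty) {r : ℝ} (hr : 0 < r) {ε : ℝ≥0∞} (hε : 0 < ε) :
    ∃ D ⊆ P, MeasurableSet D ∧ μ (P \ D) ≤ ε ∧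
      ∃ y : SimpleFunc T X, ∀ t ∈ D, (Ψ t ∩ ball (y t) r).Nonempty := by
  obtain ⟨K, hKP, hK, hPK⟩ := hreg ε hε P hP hPfin
  have hloc : ∀ t : K, ∃ (O : Set T) (c : X), IsOpen O ∧ (t : T) ∈ O ∧
      ∀ s ∈ O ∩ P, (Ψ s ∩ ball c r).Nonempty := by
    rintro ⟨t, ht⟩
    obtain ⟨c, hc⟩ := hne t (hKP ht)
    obtain ⟨O, hO, htO, hOP⟩ :=
      mem_nhdsWithin.1 (hΨ t (hKP ht) _ isOpen_ball ⟨c, hc, mem_ball_self hr⟩)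
    exact ⟨O, c, hO, htO, hOP⟩
  choose O c hO htO hOP using hloc
  obtain ⟨u, hKu⟩ := hK.elim_finite_subcover O hO fun t ht => mem_iUnion.2 ⟨⟨t, ht⟩, htO _⟩
  obtain ⟨y, hy⟩ := SimpleFunc.exists_eq_of_mem_biUnion u (fun i => (hO i).measurableSet) c
  refine ⟨P ∩ ⋃ i ∈ u, O i, inter_subset_left,
    hP.inter (Finset.measurableSet_biUnion u fun i _ => (hO i).measurableSet), ?_, y, ?_⟩
  · exact (measure_mono (sdiff_subset_sdiff_right (subset_inter hKP hKu))).trans hPK.le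
  · rintro t ⟨htP, htu⟩
    obtain ⟨i, -, hti, hyt⟩ := hy t htu
    exact hyt ▸ hOP i t ⟨hti, htP⟩

-- The fibres of `y` are refined separately, each with an equal share of the loss `δ`.
theorem exists_simpleFunc_refine (hreg : InnerRegularM μ) {Φ : T → Set X} {D : Set T}
    (hD : MeasurableSet D) (hDfin : μ D < ⊤) (hΦ : LscOn D Φ) (y : SimpleFunc T X) {r : ℝ}
    (hy : ∀ t ∈ D, (Φ t ∩ ball (y t) r).Nonempty) {r' : ℝ} (hr' : 0 < r') {δ : ℝ≥0∞}
    (hδ : 0 < δ) :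
    ∃ D' ⊆ D, MeasurableSet D' ∧ μ (D \ D') ≤ δ ∧
      ∃ y' : SimpleFunc T X, ∀ t ∈ D', (Φ t ∩ ball (y t) r ∩ ball (y' t) r').Nonempty := by
  classical
  have hfiber : ∀ c : X, ∃ E ⊆ D ∩ y ⁻¹' {c}, MeasurableSet E ∧
      μ ((D ∩ y ⁻¹' {c}) \ E) ≤ δ / y.range.card ∧
      ∃ z : SimpleFunc T X, ∀ t ∈ E, (Φ t ∩ ball c r ∩ ball (z t) r').Nonempty := fun c =>
    hreg.exists_simpleFunc_inter_ball_nonempty (hD.inter (y.measurableSet_fiber c))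
      ((measure_mono inter_subset_left).trans_lt hDfin)
      ((hΦ.mono inter_subset_left).inter_isOpen isOpen_ball)
      (fun t ht => ht.2 ▸ hy t ht.1) hr' (ENNReal.div_pos hδ.ne' (ENNReal.natCast_ne_top _))
  choose E hED hE hDE z hz using hfiber
  refine ⟨⋃ c ∈ y.range, E c, iUnion₂_subset fun c _ => (hED c).trans inter_subset_left,
    Finset.measurableSet_biUnion _ fun c _ => hE c, ?_, y.bind z, fun t ht => ?_⟩
  · have hsub : D \ ⋃ c ∈ y.range, E c ⊆ ⋃ c ∈ y.range, ((D ∩ y ⁻¹' {c}) \ E c) := by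
      rintro t ⟨htD, htE⟩
      exact mem_biUnion (y.mem_range_self t)
        ⟨⟨htD, rfl⟩, fun h => htE (mem_biUnion (y.mem_range_self t) h)⟩
    calc μ (D \ ⋃ c ∈ y.range, E c)
        ≤ ∑ c ∈ y.range, μ ((D ∩ y ⁻¹' {c}) \ E c) :=
          (measure_mono hsub).trans (measure_biUnion_finset_le _ _)
      _ ≤ ∑ c ∈ y.range, δ / y.range.card := Finset.sum_le_sum fun c _ => hDE c
      _ ≤ δ := by rw [Finset.sum_const, nsmul_eq_mul]; exact ENNReal.mul_div_le
  · obtain ⟨c, -, htc⟩ := mem_iUnion₂.1 ht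
    rw [SimpleFunc.bind_apply, ((hED c) htc).2]
    exact hz c t htc

theorem exists_subset_aestronglyMeasurable_forall_mem [CompleteSpace X] (hreg : InnerRegularM μ)
    {Φ : T → Set X} {S : Set T} (hS : MeasurableSet S) (hSfin : μ S < ⊤) (hΦ : LscOn S Φ)
    (hne : ∀ t ∈ S, (Φ t).Nonempty) (hcl : ∀ t ∈ S, IsClosed (Φ t)) {ε : ℝ≥0∞} (hε : 0 < ε) :
    ∃ D ⊆ S, MeasurableSet D ∧ μ (S \ D) ≤ ε ∧
      ∃ x : T → X, AEStronglyMeasurable x (μ.restrict D) ∧ ∀ t ∈ D, x t ∈ Φ t := by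
  let δ : ℕ → ℝ≥0∞ := fun k => ε * 2⁻¹ ^ (k + 1)
  have hδ : ∀ k, 0 < δ k := fun k =>
    ENNReal.mul_pos hε.ne' (pow_ne_zero _ (ENNReal.inv_ne_zero.2 ENNReal.ofNat_ne_top))
  have hδsum : ∑' k, δ k = ε := by
    rw [ENNReal.tsum_mul_left, ENNReal.tsum_geometric_add_one, ENNReal.one_sub_inv_two, inv_inv,
      ENNReal.inv_mul_cancel two_ne_zero ENNReal.ofNat_ne_top, mul_one]
  obtain ⟨D₀, hD₀S, hD₀, hSD₀, y₀, hy₀⟩ :=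
    hreg.exists_simpleFunc_inter_ball_nonempty hS hSfin hΦ hne one_pos (hδ 0)
  let Good : ℕ → Set T × SimpleFunc T X → Prop := fun n p =>
    p.1 ⊆ S ∧ MeasurableSet p.1 ∧ ∀ t ∈ p.1, (Φ t ∩ ball (p.2 t) ((1 / 2) ^ n)).Nonempty
  let Step : ℕ → Set T × SimpleFunc T X → Set T × SimpleFunc T X → Prop := fun n p q =>
    q.1 ⊆ p.1 ∧ μ (p.1 \ q.1) ≤ δ (n + 1) ∧ ∀ t ∈ q.1, dist (p.2 t) (q.2 t) ≤ 2 * (1 / 2) ^ n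
  have hstep : ∀ n p, Good n p → ∃ q, Good (n + 1) q ∧ Step n p q := by
    rintro n ⟨D, y⟩ ⟨hDS, hD, hy⟩
    obtain ⟨D', hD'D, hD', hDD', y', hy'⟩ := hreg.exists_simpleFunc_refine hD
      ((measure_mono hDS).trans_lt hSfin) (hΦ.mono hDS) y hy (r' := (1 / 2) ^ (n + 1))
      (by positivity) (hδ (n + 1))
    refine ⟨(D', y'), ⟨hD'D.trans hDS, hD', fun t ht => (hy' t ht).mono
      (inter_subset_inter_left _ inter_subset_left)⟩, hD'D, hDD', fun t ht => ?_⟩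
    calc dist (y t) (y' t) ≤ (1 / 2) ^ n + (1 / 2) ^ (n + 1) :=
          (dist_lt_add_of_nonempty_ball_inter_ball <|
            (hy' t ht).mono (inter_subset_inter_left _ inter_subset_right)).le
      _ ≤ 2 * (1 / 2) ^ n := by
          rw [pow_succ]; linarith [pow_nonneg (by norm_num : (0 : ℝ) ≤ 1 / 2) n]
  obtain ⟨p, hp₀, hp⟩ := exists_seq_of_forall_exists_succ (P := Good) (R := Step)
    (a₀ := (D₀, y₀)) ⟨hD₀S, hD₀, by simpa using hy₀⟩ hstep
  have hmem : ∀ t ∈ ⋂ n, (p n).1, ∀ n, t ∈ (p n).1 := fun t ht => mem_iInter.1 ht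
  have hD : MeasurableSet (⋂ n, (p n).1) := MeasurableSet.iInter fun n => (hp n).1.2.1
  refine ⟨⋂ n, (p n).1, (iInter_subset _ 0).trans (hp 0).1.1, hD, ?_,
    exists_aestronglyMeasurable_forall_mem_of_inter_ball_nonempty hD
      (fun t ht => hcl t <| (hp 0).1.1 (hmem t ht 0))
      (fun n => (p n).2.aestronglyMeasurable) (fun t ht n => (hp n).2.2.2 t (hmem t ht (n + 1)))
      (fun t ht n => (hp n).1.2.2 t (hmem t ht n))⟩
  calc μ (S \ ⋂ n, (p n).1) ≤ μ (S \ (p 0).1) + ∑' n, μ ((p n).1 \ (p (n + 1)).1) :=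
        measure_diff_iInter_le _ _
    _ ≤ δ 0 + ∑' n, δ (n + 1) :=
        add_le_add (hp₀ ▸ hSD₀) (ENNReal.tsum_le_tsum fun n => (hp n).2.2.1)
    _ = ε := by rw [← tsum_eq_zero_add' ENNReal.summable, hδsum]

end InnerRegularM

theorem AdmissibleMultifunction.exists_subset_aestronglyMeasurable_forall_mem
    {T X : Type*} [TopologicalSpace T] [MeasurableSpace T] [OpensMeasurableSpace T]
    [NormedAddCommGroup X] [NormedSpace ℝ X] [CompleteSpace X] {μ : Measure T} {C : T → Set X}
    (hC : AdmissibleMultifunction μ C) (hreg : InnerRegularM μ) {S : Set T}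
    (hS : MeasurableSet S) (hSfin : μ S < ⊤) (hne : ∀ t ∈ S, (C t).Nonempty) {ε : ℝ≥0∞}
    (hε : 0 < ε) :
    ∃ D ⊆ S, MeasurableSet D ∧ μ (S \ D) ≤ ε ∧
      ∃ x : T → X, AEStronglyMeasurable x (μ.restrict D) ∧ ∀ t ∈ D, x t ∈ C t := by
  obtain ⟨I, Ci, hLusin, -, hCeq⟩ := hC
  obtain ⟨B, hBS, -, hSB, hB⟩ := hLusin (ε / 2) (ENNReal.half_pos hε.ne') S hS hSfin
  obtain ⟨B', hB'B, hB', hSB'⟩ := exists_measurableSet_subset_measure_diff_le (μ := μ) hS B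
  have hBC : LscOn B C := by simpa only [← hCeq] using (LscOn.iUnion hB).closure
  obtain ⟨D, hDB', hD, hB'D, hDsel⟩ := hreg.exists_subset_aestronglyMeasurable_forall_mem hB'
    ((measure_mono (hB'B.trans hBS)).trans_lt hSfin) (hBC.mono hB'B)
    (fun t ht => hne t (hBS (hB'B ht))) (fun t _ => hCeq t ▸ isClosed_closure)
    (ENNReal.half_pos hε.ne')
  refine ⟨D, hDB'.trans (hB'B.trans hBS), hD, ?_, hDsel⟩
  calc μ (S \ D) ≤ μ (S \ B') + μ (B' \ D) :=
        (measure_mono (sdiff_triangle S B' D)).trans (measure_union_le _ _)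
    _ ≤ ε / 2 + ε / 2 := add_le_add (hSB'.trans hSB.le) hB'D
    _ = ε := ENNReal.add_halves ε

theorem stmt16_general {T X : Type*} [TopologicalSpace T] [MeasurableSpace T]
    [OpensMeasurableSpace T]
    [NormedAddCommGroup X] [NormedSpace ℝ X] [CompleteSpace X]
    (μ : MeasureTheory.Measure T) [MeasureTheory.SigmaFinite μ]
    (hreg : InnerRegularM μ)
    (C : T → Set X) (hC : AdmissibleMultifunction μ C)
    (A : Set T) (hA : MeasurableSet A)
    (hne : ∀ t ∈ A, (C t).Nonempty) :
    ∃ x : T → X, MeasureTheory.StronglyMeasurable x ∧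
      ∀ᵐ t ∂(μ.restrict A), x t ∈ C t := by
  obtain ⟨x, hx, hxC⟩ := exists_aestronglyMeasurable_ae_mem_of_forall_exists hA
    fun S hSA hS hSfin _ hε => hC.exists_subset_aestronglyMeasurable_forall_mem hreg hS hSfin
      (fun t ht => hne t (hSA ht)) hε
  refine ⟨hx.mk x, hx.stronglyMeasurable_mk, ?_⟩
  filter_upwards [hx.ae_eq_mk, hxC] with t hxt htC
  rwa [← hxt]

/-- strongly measurable selection of an admissible multifunction with
nonempty values. -/
theorem stmt16 {T X : Type*} [TopologicalSpace T] [MeasurableSpace T]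
    [OpensMeasurableSpace T]
    [NormedAddCommGroup X] [NormedSpace ℝ X] [CompleteSpace X]
    (μ : MeasureTheory.Measure T) [MeasureTheory.SigmaFinite μ] [μ.IsComplete]
    (hreg : InnerRegularM μ)
    (C : T → Set X) (hC : AdmissibleMultifunction μ C)
    (A : Set T) (hA : MeasurableSet A)
    (hne : ∀ t ∈ A, (C t).Nonempty) :
    ∃ x : T → X, MeasureTheory.StronglyMeasurable x ∧
      ∀ᵐ t ∂(μ.restrict A), x t ∈ C t :=
  stmt16_general μ hreg C hC A hA hne
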